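/- arXiv:2302.03456 — 10 statements merged into one kernel-verified Lean document; each statement's English description precedes it below -/
import Mathlib

section
/- Let H be a digraph with edge relation < that is loopless and has no directed cycles of length 2 or 3, and let f : Finset.powerset [n] → V(H) be such that for every partition of [n] into three disjoint sets A, B, C, two of f(A), f(B), f(C) are equal and there is an edge from that common value to the third. Then for any two disjoint subsets A, B of [n], either f(A) = f(B), or f(A) < f(B), or f(B) < f(A). -/
/-- Disjointness law: for a set-function polymorphism of (1-in-3, Ĥ), values on
disjoint sets are equal or adjacent. -/
theorem stmt_7 {n : ℕ} {V : Type} (E : V → V → Prop)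
    (hirr : ∀ v, ¬ E v v)
    (hno2 : ∀ u v, E u v → ¬ E v u)
    (hno3 : ∀ u v w, E u v → E v w → ¬ E w u)
    (f : Finset (Fin n) → V)
    (hpoly : ∀ A B C : Finset (Fin n),
      Disjoint A B → Disjoint A C → Disjoint B C → A ∪ B ∪ C = Finset.univ →
      (f A = f B ∧ E (f A) (f C)) ∨ (f A = f C ∧ E (f A) (f B)) ∨
      (f B = f C ∧ E (f B) (f A))) :
    ∀ A B : Finset (Fin n), Disjoint A B →
      f A = f B ∨ E (f A) (f B) ∨ E (f B) (f A) := by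
  intro A B hAB
  have h := hpoly A B (A ∪ B)ᶜ hAB
    ((disjoint_compl_right.mono_left Finset.subset_union_left))
    ((disjoint_compl_right.mono_left Finset.subset_union_right))
    (Finset.union_compl _)
  rcases h with ⟨h1, _⟩ | ⟨_, h2⟩ | ⟨_, h3⟩
  · exact Or.inl h1
  · exact Or.inr (Or.inl h2)
  · exact Or.inr (Or.inr h3)
end

section
/- Let H be a loopless digraph with no 2-cycles or 3-cycles with edge relation <, and f : 2^[n] → V(H) a set-function polymorphism of (1-in-3, Ĥ). If X, Y, S ⊆ [n] are pairwise disjoint, f(X) = f(Y), and not f(X) < f(X ∪ S), then f(X ∪ S) = f(Y ∪ S). -/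
/-- If X, Y, S are pairwise disjoint, f(X) = f(Y) and ¬(f(X) < f(X∪S)),
then f(X∪S) = f(Y∪S). -/
theorem stmt_9 {n : ℕ} {V : Type} (E : V → V → Prop)
    (hirr : ∀ v, ¬ E v v)
    (hno2 : ∀ u v, E u v → ¬ E v u)
    (hno3 : ∀ u v w, E u v → E v w → ¬ E w u)
    (f : Finset (Fin n) → V)
    (hpoly : ∀ A B C : Finset (Fin n),
      Disjoint A B → Disjoint A C → Disjoint B C → A ∪ B ∪ C = Finset.univ →
      (f A = f B ∧ E (f A) (f C)) ∨ (f A = f C ∧ E (f A) (f B)) ∨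
      (f B = f C ∧ E (f B) (f A)))
    (X Y S : Finset (Fin n))
    (hXY : Disjoint X Y) (hXS : Disjoint X S) (hYS : Disjoint Y S)
    (heq : f X = f Y) (hnot : ¬ E (f X) (f (X ∪ S))) :
    f (X ∪ S) = f (Y ∪ S) := by
  set Z := (X ∪ Y ∪ S)ᶜ with hZ
  have dXZ : Disjoint X Z := Finset.disjoint_left.mpr (by intro a ha hz; simp [hZ] at hz; tauto)
  have dYZ : Disjoint Y Z := Finset.disjoint_left.mpr (by intro a ha hz; simp [hZ] at hz; tauto)
  have dSZ : Disjoint S Z := Finset.disjoint_left.mpr (by intro a ha hz; simp [hZ] at hz; tauto)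
  have dXSY : Disjoint (X ∪ S) Y := Finset.disjoint_union_left.mpr ⟨hXY, hYS.symm⟩
  have dXSZ : Disjoint (X ∪ S) Z := Finset.disjoint_union_left.mpr ⟨dXZ, dSZ⟩
  have dYSX : Disjoint (Y ∪ S) X := Finset.disjoint_union_left.mpr ⟨hXY.symm, hXS.symm⟩
  have dYSZ : Disjoint (Y ∪ S) Z := Finset.disjoint_union_left.mpr ⟨dYZ, dSZ⟩
  have hu1 : (X ∪ S) ∪ Y ∪ Z = Finset.univ := by
    ext a; simp [hZ]; tauto
  have hu2 : (Y ∪ S) ∪ X ∪ Z = Finset.univ := by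
    ext a; simp [hZ]; tauto
  have h2 := hpoly (X ∪ S) Y Z dXSY dXSZ dYZ hu1
  have h3 := hpoly (Y ∪ S) X Z dYSX dYSZ dXZ hu2
  rcases h2 with ⟨h2a, h2b⟩ | ⟨h2a, h2b⟩ | ⟨h2a, h2b⟩
  · -- f(X∪S) = f Y (= f X), E (fX) (fZ)
    rw [← heq] at h2a
    rw [h2a] at h2b
    rcases h3 with ⟨h3a, h3b⟩ | ⟨h3a, h3b⟩ | ⟨h3a, h3b⟩
    · rw [h2a]; exact h3a.symm
    · rw [← h3a] at h2b; exact absurd h3b (hno2 _ _ h2b)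
    · rw [← h3a] at h2b; exact absurd h2b (hirr _)
  · -- f(X∪S) = f Z, E (f(X∪S)) (fX)
    rw [← heq] at h2b
    rcases h3 with ⟨h3a, h3b⟩ | ⟨h3a, h3b⟩ | ⟨h3a, h3b⟩
    · rw [← h3a, h2a] at h2b; exact absurd h2b (hno2 _ _ h3b)
    · rw [h2a]; exact h3a.symm
    · rw [h3a, ← h2a] at h2b; exact absurd h2b (hirr _)
  · -- f Y = f Z, E (fY) (f(X∪S))
    rw [← heq] at h2b
    exact absurd h2b hnot
end

section
/- Let H be a loopless digraph with no 2-cycles or 3-cycles with edge relation <, and f : 2^[n] → V(H) a set-function polymorphism of (1-in-3, Ĥ). If X, Y, S, T ⊆ [n] are pairwise disjoint and f(X) = f(Y) = f(X ∪ S) = f(X ∪ T), then f(X ∪ S ∪ T) = f(X). -/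
/-- If X, Y, S, T are pairwise disjoint and f(X)=f(Y)=f(X∪S)=f(X∪T),
then f(X∪S∪T) = f(X). -/
theorem stmt_10 {n : ℕ} {V : Type} (E : V → V → Prop)
    (hirr : ∀ v, ¬ E v v)
    (hno2 : ∀ u v, E u v → ¬ E v u)
    (hno3 : ∀ u v w, E u v → E v w → ¬ E w u)
    (f : Finset (Fin n) → V)
    (hpoly : ∀ A B C : Finset (Fin n),
      Disjoint A B → Disjoint A C → Disjoint B C → A ∪ B ∪ C = Finset.univ →
      (f A = f B ∧ E (f A) (f C)) ∨ (f A = f C ∧ E (f A) (f B)) ∨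
      (f B = f C ∧ E (f B) (f A)))
    (X Y S T : Finset (Fin n))
    (hXY : Disjoint X Y) (hXS : Disjoint X S) (hXT : Disjoint X T)
    (hYS : Disjoint Y S) (hYT : Disjoint Y T) (hST : Disjoint S T)
    (h1 : f X = f Y) (h2 : f X = f (X ∪ S)) (h3 : f X = f (X ∪ T)) :
    f (X ∪ S ∪ T) = f X := by
  classical
  have dcompl : ∀ A B : Finset (Fin n), A ⊆ B → Disjoint A Bᶜ := by
    intro A B h
    exact disjoint_compl_right.mono_left h
  -- Step 1: E a q, where q = f ((X ∪ S ∪ Y)ᶜ)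
  have hq : E (f X) (f ((X ∪ S ∪ Y)ᶜ)) := by
    have hd1 : Disjoint (X ∪ S) Y := Finset.disjoint_union_left.mpr ⟨hXY, hYS.symm⟩
    have hd2 : Disjoint (X ∪ S) ((X ∪ S ∪ Y)ᶜ) :=
      dcompl _ _ Finset.subset_union_left
    have hd3 : Disjoint Y ((X ∪ S ∪ Y)ᶜ) := dcompl _ _ Finset.subset_union_right
    have hu : (X ∪ S) ∪ Y ∪ (X ∪ S ∪ Y)ᶜ = Finset.univ := Finset.union_compl _
    rcases hpoly (X ∪ S) Y ((X ∪ S ∪ Y)ᶜ) hd1 hd2 hd3 hu with ⟨h, he⟩ | ⟨h, he⟩ | ⟨h, he⟩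
    · rwa [← h2] at he
    · rw [← h2, ← h1] at he; exact absurd he (hirr _)
    · rw [← h1, ← h2] at he; exact absurd he (hirr _)
  -- Step 2: E a r, where r = f ((X ∪ T ∪ Y)ᶜ)
  have hr : E (f X) (f ((X ∪ T ∪ Y)ᶜ)) := by
    have hd1 : Disjoint (X ∪ T) Y := Finset.disjoint_union_left.mpr ⟨hXY, hYT.symm⟩
    have hd2 : Disjoint (X ∪ T) ((X ∪ T ∪ Y)ᶜ) :=
      dcompl _ _ Finset.subset_union_left
    have hd3 : Disjoint Y ((X ∪ T ∪ Y)ᶜ) := dcompl _ _ Finset.subset_union_right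
    have hu : (X ∪ T) ∪ Y ∪ (X ∪ T ∪ Y)ᶜ = Finset.univ := Finset.union_compl _
    rcases hpoly (X ∪ T) Y ((X ∪ T ∪ Y)ᶜ) hd1 hd2 hd3 hu with ⟨h, he⟩ | ⟨h, he⟩ | ⟨h, he⟩
    · rwa [← h3] at he
    · rw [← h3, ← h1] at he; exact absurd he (hirr _)
    · rw [← h1, ← h3] at he; exact absurd he (hirr _)
  -- Step 3: f (Y ∪ S) = f X
  have hYSa : f (Y ∪ S) = f X := by
    have hd1 : Disjoint X (Y ∪ S) := Finset.disjoint_union_right.mpr ⟨hXY, hXS⟩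
    have hsub : X ∪ (Y ∪ S) ⊆ X ∪ S ∪ Y := by
      intro x hx; simp only [Finset.mem_union] at hx ⊢; tauto
    have hd2 : Disjoint X ((X ∪ S ∪ Y)ᶜ) :=
      dcompl _ _ (Finset.subset_union_left.trans (Finset.subset_union_left))
    have hd3 : Disjoint (Y ∪ S) ((X ∪ S ∪ Y)ᶜ) := dcompl _ _ (by
      intro x hx; simp only [Finset.mem_union] at hx ⊢; tauto)
    have hu : X ∪ (Y ∪ S) ∪ (X ∪ S ∪ Y)ᶜ = Finset.univ := by
      have : X ∪ (Y ∪ S) = X ∪ S ∪ Y := by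
        ext x; simp only [Finset.mem_union]; tauto
      rw [this, Finset.union_compl]
    rcases hpoly X (Y ∪ S) ((X ∪ S ∪ Y)ᶜ) hd1 hd2 hd3 hu with ⟨h, he⟩ | ⟨h, he⟩ | ⟨h, he⟩
    · exact h.symm
    · rw [← h] at hq; exact absurd hq (hirr _)
    · rw [h] at he; exact absurd hq (hno2 _ _ he)
  -- Step 4: f (Y ∪ T) = f X
  have hYTa : f (Y ∪ T) = f X := by
    have hd1 : Disjoint X (Y ∪ T) := Finset.disjoint_union_right.mpr ⟨hXY, hXT⟩
    have hd2 : Disjoint X ((X ∪ T ∪ Y)ᶜ) :=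
      dcompl _ _ (Finset.subset_union_left.trans (Finset.subset_union_left))
    have hd3 : Disjoint (Y ∪ T) ((X ∪ T ∪ Y)ᶜ) := dcompl _ _ (by
      intro x hx; simp only [Finset.mem_union] at hx ⊢; tauto)
    have hu : X ∪ (Y ∪ T) ∪ (X ∪ T ∪ Y)ᶜ = Finset.univ := by
      have : X ∪ (Y ∪ T) = X ∪ T ∪ Y := by
        ext x; simp only [Finset.mem_union]; tauto
      rw [this, Finset.union_compl]
    rcases hpoly X (Y ∪ T) ((X ∪ T ∪ Y)ᶜ) hd1 hd2 hd3 hu with ⟨h, he⟩ | ⟨h, he⟩ | ⟨h, he⟩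
    · exact h.symm
    · rw [← h] at hr; exact absurd hr (hirr _)
    · rw [h] at he; exact absurd hr (hno2 _ _ he)
  -- Step 5: E a z, where z = f ((X ∪ S ∪ T ∪ Y)ᶜ)
  have haz : E (f X) (f ((X ∪ S ∪ T ∪ Y)ᶜ)) := by
    have hd1 : Disjoint (X ∪ T) (Y ∪ S) := by
      rw [Finset.disjoint_union_left, Finset.disjoint_union_right, Finset.disjoint_union_right]
      exact ⟨⟨hXY, hXS⟩, ⟨hYT.symm, hST.symm⟩⟩
    have hd2 : Disjoint (X ∪ T) ((X ∪ S ∪ T ∪ Y)ᶜ) := dcompl _ _ (by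
      intro x hx; simp only [Finset.mem_union] at hx ⊢; tauto)
    have hd3 : Disjoint (Y ∪ S) ((X ∪ S ∪ T ∪ Y)ᶜ) := dcompl _ _ (by
      intro x hx; simp only [Finset.mem_union] at hx ⊢; tauto)
    have hu : (X ∪ T) ∪ (Y ∪ S) ∪ (X ∪ S ∪ T ∪ Y)ᶜ = Finset.univ := by
      have : (X ∪ T) ∪ (Y ∪ S) = X ∪ S ∪ T ∪ Y := by
        ext x; simp only [Finset.mem_union]; tauto
      rw [this, Finset.union_compl]
    rcases hpoly (X ∪ T) (Y ∪ S) ((X ∪ S ∪ T ∪ Y)ᶜ) hd1 hd2 hd3 hu with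
      ⟨h, he⟩ | ⟨h, he⟩ | ⟨h, he⟩
    · rwa [← h3] at he
    · rw [← h3, hYSa] at he; exact absurd he (hirr _)
    · rw [hYSa, ← h3] at he; exact absurd he (hirr _)
  -- Final step: partition (X ∪ S ∪ T, Y, Z)
  have hd1 : Disjoint (X ∪ S ∪ T) Y := by
    rw [Finset.disjoint_union_left, Finset.disjoint_union_left]
    exact ⟨⟨hXY, hYS.symm⟩, hYT.symm⟩
  have hd2 : Disjoint (X ∪ S ∪ T) ((X ∪ S ∪ T ∪ Y)ᶜ) :=
    dcompl _ _ Finset.subset_union_left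
  have hd3 : Disjoint Y ((X ∪ S ∪ T ∪ Y)ᶜ) := dcompl _ _ Finset.subset_union_right
  have hu : (X ∪ S ∪ T) ∪ Y ∪ (X ∪ S ∪ T ∪ Y)ᶜ = Finset.univ := Finset.union_compl _
  rcases hpoly (X ∪ S ∪ T) Y ((X ∪ S ∪ T ∪ Y)ᶜ) hd1 hd2 hd3 hu with
    ⟨h, he⟩ | ⟨h, he⟩ | ⟨h, he⟩
  · rw [h, ← h1]
  · rw [← h1] at he; exact absurd haz (fun hz => hno2 _ _ hz (h ▸ he))
  · rw [← h1] at h; rw [← h] at haz; exact absurd haz (hirr _)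
end

section
/- Let H be a loopless digraph with no 2-cycles or 3-cycles with edge relation <, and f : 2^[n] → V(H) a set-function polymorphism of (1-in-3, Ĥ). If X, Y, S, T ⊆ [n] are pairwise disjoint, f(X ∪ S) = f(X ∪ T), and f(X) = f(Y), then f(X) ≤ f(X ∪ S ∪ T) or f(X ∪ S) < f(X ∪ S ∪ T). -/
/-- If X, Y, S, T are pairwise disjoint, f(X∪S)=f(X∪T) and f(X)=f(Y),
then f(X) ≤ f(X∪S∪T) or f(X∪S) < f(X∪S∪T). -/
theorem stmt_11 {n : ℕ} {V : Type} (E : V → V → Prop)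
    (hirr : ∀ v, ¬ E v v)
    (hno2 : ∀ u v, E u v → ¬ E v u)
    (hno3 : ∀ u v w, E u v → E v w → ¬ E w u)
    (f : Finset (Fin n) → V)
    (hpoly : ∀ A B C : Finset (Fin n),
      Disjoint A B → Disjoint A C → Disjoint B C → A ∪ B ∪ C = Finset.univ →
      (f A = f B ∧ E (f A) (f C)) ∨ (f A = f C ∧ E (f A) (f B)) ∨
      (f B = f C ∧ E (f B) (f A)))
    (X Y S T : Finset (Fin n))
    (hXY : Disjoint X Y) (hXS : Disjoint X S) (hXT : Disjoint X T)
    (hYS : Disjoint Y S) (hYT : Disjoint Y T) (hST : Disjoint S T)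
    (hST' : f (X ∪ S) = f (X ∪ T)) (hXY' : f X = f Y) :
    (f X = f (X ∪ S ∪ T) ∨ E (f X) (f (X ∪ S ∪ T))) ∨
      E (f (X ∪ S)) (f (X ∪ S ∪ T)) := by
  classical
  set R : Finset (Fin n) := (X ∪ Y ∪ S ∪ T)ᶜ with hR
  have dXR : Disjoint X R := Disjoint.mono_left
    (by intro x hx; simp [Finset.mem_union, hx]) disjoint_compl_right
  have dYR : Disjoint Y R := Disjoint.mono_left
    (by intro x hx; simp [Finset.mem_union, hx]) disjoint_compl_right
  have dSR : Disjoint S R := Disjoint.mono_left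
    (by intro x hx; simp [Finset.mem_union, hx]) disjoint_compl_right
  have dTR : Disjoint T R := Disjoint.mono_left
    (by intro x hx; simp [Finset.mem_union, hx]) disjoint_compl_right
  -- P1 : partition (X∪S∪T, Y, R)
  have P1 := hpoly (X ∪ S ∪ T) Y R
    (by simp [Finset.disjoint_union_left, hXY, hYS.symm, hYT.symm])
    (by simp [Finset.disjoint_union_left, dXR, dSR, dTR])
    dYR
    (by rw [Finset.eq_univ_iff_forall]; intro x
        simp [hR, Finset.mem_union, Finset.mem_compl]; tauto)
  rw [← hXY'] at P1
  rcases P1 with ⟨h1, _⟩ | ⟨hcr, hca⟩ | ⟨har, hac⟩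
  · exact Or.inl (Or.inl h1.symm)
  · -- main case: f (X∪S∪T) = f R, E (f (X∪S∪T)) (f X)
    -- P2 : partition (X∪S, Y∪T, R)
    have P2 := hpoly (X ∪ S) (Y ∪ T) R
      (by simp [Finset.disjoint_union_left, Finset.disjoint_union_right,
            hXY, hXT, hYS.symm, hST])
      (by simp [Finset.disjoint_union_left, dXR, dSR])
      (by simp [Finset.disjoint_union_left, dYR, dTR])
      (by rw [Finset.eq_univ_iff_forall]; intro x
          simp [hR, Finset.mem_union, Finset.mem_compl]; tauto)
    rw [← hcr] at P2
    rcases P2 with ⟨_, hbc⟩ | ⟨hbc2, hbd⟩ | ⟨hdc, hcb⟩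
    · exact Or.inr hbc
    · -- case α : f (X∪S) = f (X∪S∪T)
      exfalso
      -- P3 : partition (X∪T, Y∪S, R), forces E (f (X∪S∪T)) (f (Y∪S))
      have P3 := hpoly (X ∪ T) (Y ∪ S) R
        (by simp [Finset.disjoint_union_left, Finset.disjoint_union_right,
              hXY, hXS, hYT.symm, hST.symm])
        (by simp [Finset.disjoint_union_left, dXR, dTR])
        (by simp [Finset.disjoint_union_left, dYR, dSR])
        (by rw [Finset.eq_univ_iff_forall]; intro x
            simp [hR, Finset.mem_union, Finset.mem_compl]; tauto)
      rw [← hST', hbc2, ← hcr] at P3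
      have hce : E (f (X ∪ S ∪ T)) (f (Y ∪ S)) := by
        rcases P3 with ⟨he, hr⟩ | ⟨_, hr⟩ | ⟨he, hr⟩
        · exact absurd hr (hirr _)
        · exact hr
        · rw [he] at hr; exact absurd hr (hirr _)
      -- Pα1 : partition (Y, X∪S, T∪R), forces f (T∪R) = f (X∪S∪T)
      have Pα1 := hpoly Y (X ∪ S) (T ∪ R)
        (by simp [Finset.disjoint_union_right, hXY.symm, hYS])
        (by simp [Finset.disjoint_union_right, hYT, dYR])
        (by simp [Finset.disjoint_union_left, Finset.disjoint_union_right,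
              hXT, hST, dXR, dSR])
        (by rw [Finset.eq_univ_iff_forall]; intro x
            simp [hR, Finset.mem_union, Finset.mem_compl]; tauto)
      rw [← hXY', hbc2] at Pα1
      have hpc : f (T ∪ R) = f (X ∪ S ∪ T) := by
        rcases Pα1 with ⟨he, hr⟩ | ⟨he, hr⟩ | ⟨he, hr⟩
        · rw [he] at hca; exact absurd hca (hirr _)
        · exact absurd hca (hno2 _ _ hr)
        · exact he.symm
      -- Pα2 : partition (X, Y∪S, T∪R) : contradiction in all cases
      have Pα2 := hpoly X (Y ∪ S) (T ∪ R)
        (by simp [Finset.disjoint_union_right, hXY, hXS])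
        (by simp [Finset.disjoint_union_right, hXT, dXR])
        (by simp [Finset.disjoint_union_left, Finset.disjoint_union_right,
              hYT, hST, hST.symm, dYR, dSR])
        (by rw [Finset.eq_univ_iff_forall]; intro x
            simp [hR, Finset.mem_union, Finset.mem_compl]; tauto)
      rw [hpc] at Pα2
      rcases Pα2 with ⟨he, hr⟩ | ⟨he, hr⟩ | ⟨he, hr⟩
      · exact absurd hca (hno2 _ _ hr)
      · rw [he] at hca; exact absurd hca (hirr _)
      · rw [he] at hce; exact absurd hce (hirr _)
    · -- case β : f (Y∪T) = f (X∪S∪T), E (f (Y∪T)) (f (X∪S))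
      rw [hdc] at hcb
      -- P3 : partition (X∪T, Y∪S, R)
      have P3 := hpoly (X ∪ T) (Y ∪ S) R
        (by simp [Finset.disjoint_union_left, Finset.disjoint_union_right,
              hXY, hXS, hYT.symm, hST.symm])
        (by simp [Finset.disjoint_union_left, dXR, dTR])
        (by simp [Finset.disjoint_union_left, dYR, dSR])
        (by rw [Finset.eq_univ_iff_forall]; intro x
            simp [hR, Finset.mem_union, Finset.mem_compl]; tauto)
      rw [← hST', ← hcr] at P3
      rcases P3 with ⟨_, hr⟩ | ⟨he, hr⟩ | ⟨hec, hr⟩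
      · exact Or.inr hr
      · exfalso; rw [← he] at hcb; exact absurd hcb (hirr _)
      · -- f (Y∪S) = f (X∪S∪T)
        exfalso
        -- Pβ1 : partition (X, Y∪T, S∪R) forces f (S∪R) = f (X∪S∪T)
        have Pβ1 := hpoly X (Y ∪ T) (S ∪ R)
          (by simp [Finset.disjoint_union_right, hXY, hXT])
          (by simp [Finset.disjoint_union_right, hXS, dXR])
          (by simp [Finset.disjoint_union_left, Finset.disjoint_union_right,
                hYS, hST.symm, dYR, dTR])
          (by rw [Finset.eq_univ_iff_forall]; intro x
              simp [hR, Finset.mem_union, Finset.mem_compl]; tauto)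
        rw [hdc] at Pβ1
        have hqc : f (S ∪ R) = f (X ∪ S ∪ T) := by
          rcases Pβ1 with ⟨he, hr⟩ | ⟨he, hr⟩ | ⟨he, hr⟩
          · rw [he] at hca; exact absurd hca (hirr _)
          · exact absurd hca (hno2 _ _ hr)
          · exact he.symm
        -- Pβ2 : partition (Y, X∪T, S∪R) : contradiction in all cases
        have Pβ2 := hpoly Y (X ∪ T) (S ∪ R)
          (by simp [Finset.disjoint_union_right, hXY.symm, hYT])
          (by simp [Finset.disjoint_union_right, hYS, dYR])
          (by simp [Finset.disjoint_union_left, Finset.disjoint_union_right,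
                hXS, hST, hST.symm, dXR, dTR])
          (by rw [Finset.eq_univ_iff_forall]; intro x
              simp [hR, Finset.mem_union, Finset.mem_compl]; tauto)
        rw [← hXY', ← hST', hqc] at Pβ2
        rcases Pβ2 with ⟨he, hr⟩ | ⟨he, hr⟩ | ⟨he, hr⟩
        · exact absurd hca (hno2 _ _ hr)
        · rw [he] at hca; exact absurd hca (hirr _)
        · rw [← he] at hcb; exact absurd hcb (hirr _)
  · exact Or.inl (Or.inr hac)
end

section
/- Let H be a digraph on N vertices with no directed cycles of length ≤ 3 and edge relation <, and f : 2^[n] → V(H) a set-function polymorphism of (1-in-3, Ĥ). If there exist sets X₁, ..., X_k ⊆ [n] with k > N and f(X₁) < f(X₂) < ... < f(X_k), then there exist indices i, j and a pair of values such that f(X_i) and f(X_j) are neither equal nor connected by an edge in either direction. -/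
/-- A strictly increasing chain of length > N of values of a set-function
polymorphism yields two values that are neither equal nor adjacent. -/
theorem stmt_12 {n N : ℕ} {V : Type} [Fintype V] (hN : Fintype.card V = N)
    (E : V → V → Prop)
    (hirr : ∀ v, ¬ E v v)
    (hno2 : ∀ u v, E u v → ¬ E v u)
    (hno3 : ∀ u v w, E u v → E v w → ¬ E w u)
    (f : Finset (Fin n) → V)
    (hpoly : ∀ A B C : Finset (Fin n),
      Disjoint A B → Disjoint A C → Disjoint B C → A ∪ B ∪ C = Finset.univ →
      (f A = f B ∧ E (f A) (f C)) ∨ (f A = f C ∧ E (f A) (f B)) ∨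
      (f B = f C ∧ E (f B) (f A)))
    (k : ℕ) (hk : k > N) (X : ℕ → Finset (Fin n))
    (hchain : ∀ i, i + 1 < k → E (f (X i)) (f (X (i + 1)))) :
    ∃ i j, i < k ∧ j < k ∧ f (X i) ≠ f (X j) ∧
      ¬ E (f (X i)) (f (X j)) ∧ ¬ E (f (X j)) (f (X i)) := by
  by_contra hcon
  push_neg at hcon
  -- every pair is equal or adjacent; derive transitivity of the chain
  have key : ∀ j, j < k → ∀ i, i < j → E (f (X i)) (f (X j)) := by
    intro j
    induction j with
    | zero => intro _ i hi; omega
    | succ m ih =>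
      intro hm i hi
      have edge : E (f (X m)) (f (X (m + 1))) := hchain m hm
      rcases Nat.lt_succ_iff_lt_or_eq.mp hi with h | h
      · have hEim : E (f (X i)) (f (X m)) := ih (by omega) i h
        have htri := hcon i (m + 1) (by omega) hm
        by_cases heq : f (X i) = f (X (m + 1))
        · exact absurd (heq ▸ hEim) (hno2 _ _ edge)
        · by_cases hE : E (f (X i)) (f (X (m + 1)))
          · exact hE
          · have hE' := htri heq hE
            exact absurd hE' (hno3 _ _ _ hEim edge)
      · subst h; exact edge
  -- injective map Fin k → V contradicts card
  have hinj : Function.Injective (fun i : Fin k => f (X i.val)) := by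
    intro a b hab
    simp only [] at hab
    by_contra hne
    rcases lt_or_gt_of_ne (fun h : a.val = b.val => hne (Fin.ext h)) with h | h
    · exact hirr _ (hab ▸ key b.val b.isLt a.val h)
    · exact hirr _ (hab ▸ key a.val a.isLt b.val h)
  have := Fintype.card_le_of_injective _ hinj
  simp [hN] at this
  omega
end

section
/- Every ternary polymorphism f : (ℤ/2k)³ → {0,1} of the template (D̂_{2k}, NAE) for k ≥ 2 is non-constant and depends on exactly one coordinate; specifically, f is of the form (x₁,x₂,x₃) ↦ xᵢ + c (mod 2) for some i ∈ {1,2,3} and c ∈ {0,1}. -/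
private lemma zmod2_ne {a b : ZMod 2} (h : a ≠ b) : b = a + 1 := by
  revert h; revert a b; decide

private lemma zmod2_ne' {a b : ZMod 2} (h : a ≠ b) : a = b + 1 := by
  revert h; revert a b; decide

private lemma zmod2_self_ne (a : ZMod 2) : a ≠ a + 1 := by revert a; decide

private lemma zmod2_aa (a : ZMod 2) : a + 1 + 1 = a := by revert a; decide

private lemma aux_const {n : ℕ} [NeZero n] (φ : ZMod n → ZMod 2)
    (h : ∀ d, φ (d + 1) = φ d) : ∀ d, φ d = φ 0 := by
  have key : ∀ m : ℕ, φ (m : ZMod n) = φ 0 := by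
    intro m
    induction m with
    | zero => norm_num
    | succ m ih => push_cast; rw [h, ih]
  intro d
  have := key d.val
  rwa [ZMod.natCast_rightInverse d] at this

private lemma aux_affine {n : ℕ} [NeZero n] (φ : ZMod n → ZMod 2)
    (h : ∀ d, φ (d + 1) = φ d + 1) : ∀ d, φ d = φ 0 + ((d.val : ℕ) : ZMod 2) := by
  have key : ∀ m : ℕ, φ (m : ZMod n) = φ 0 + ((m : ℕ) : ZMod 2) := by
    intro m
    induction m with
    | zero => norm_num
    | succ m ih => push_cast; push_cast at ih; rw [h, ih]; ring
  intro d
  have := key d.val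
  rwa [ZMod.natCast_rightInverse d] at this

private lemma aux_cyc {n : ℕ} [NeZero n] (φ : ZMod n → ZMod 2)
    (H : ∀ d, φ d ≠ φ (d + 1) → φ (d + 1) ≠ φ (d + 2)) :
    (∀ d, φ (d + 1) = φ d) ∨ (∀ d, φ (d + 1) = φ d + 1) := by
  by_cases h : ∀ d, φ (d + 1) = φ d
  · exact Or.inl h
  · push_neg at h
    obtain ⟨d₀, hd₀⟩ := h
    right
    have key : ∀ m : ℕ, φ (d₀ + m) ≠ φ (d₀ + m + 1) := by
      intro m
      induction m with
      | zero => simp only [Nat.cast_zero, add_zero]; exact fun h' => hd₀ h'.symm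
      | succ m ih =>
        have h2 := H (d₀ + m) ih
        push_cast
        have e1 : d₀ + ((m : ZMod n) + 1) = d₀ + (m : ZMod n) + 1 := by ring
        have e2 : d₀ + (m : ZMod n) + 1 + 1 = d₀ + (m : ZMod n) + 2 := by ring
        rw [e1, e2]
        exact h2
    intro d
    have hne := key (d - d₀).val
    rw [ZMod.natCast_rightInverse (d - d₀)] at hne
    have e : d₀ + (d - d₀) = d := by ring
    rw [e] at hne
    exact zmod2_ne hne

/-- Every ternary polymorphism of (D̂_{2k}, NAE) for k ≥ 2 is a function of
the form (x₁,x₂,x₃) ↦ xᵢ + c (mod 2); in particular it is non-constant and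
depends on exactly one coordinate. -/
theorem stmt_14 (k : ℕ) (hk : 2 ≤ k)
    (f : ZMod (2 * k) → ZMod (2 * k) → ZMod (2 * k) → ZMod 2)
    (hpoly : ∀ x₁ x₂ x₃ y₁ y₂ y₃ z₁ z₂ z₃ : ZMod (2 * k),
      ((x₁ = y₁ ∧ z₁ = x₁ + 1) ∨ (x₁ = z₁ ∧ y₁ = x₁ + 1) ∨ (y₁ = z₁ ∧ x₁ = y₁ + 1)) →
      ((x₂ = y₂ ∧ z₂ = x₂ + 1) ∨ (x₂ = z₂ ∧ y₂ = x₂ + 1) ∨ (y₂ = z₂ ∧ x₂ = y₂ + 1)) →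
      ((x₃ = y₃ ∧ z₃ = x₃ + 1) ∨ (x₃ = z₃ ∧ y₃ = x₃ + 1) ∨ (y₃ = z₃ ∧ x₃ = y₃ + 1)) →
      ¬ (f x₁ x₂ x₃ = f y₁ y₂ y₃ ∧ f y₁ y₂ y₃ = f z₁ z₂ z₃)) :
    ∃ i : Fin 3, ∃ c : ZMod 2,
      ∀ x₁ x₂ x₃ : ZMod (2 * k),
        f x₁ x₂ x₃ = ((![x₁, x₂, x₃] i).val : ZMod 2) + c := by
  haveI : NeZero (2 * k) := ⟨by omega⟩
  -- Diagonal shift: f(a+1,b+1,c+1) = f(a,b,c) + 1.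
  have SH : ∀ a b c : ZMod (2 * k), f (a + 1) (b + 1) (c + 1) = f a b c + 1 := by
    intro a b c
    have h := hpoly a b c a b c (a + 1) (b + 1) (c + 1)
      (Or.inl ⟨rfl, rfl⟩) (Or.inl ⟨rfl, rfl⟩) (Or.inl ⟨rfl, rfl⟩)
    exact zmod2_ne fun he => h ⟨rfl, he⟩
  have hf1 : ∀ u v : ZMod (2 * k), f 1 u v = f 0 (u - 1) (v - 1) + 1 := by
    intro u v
    have := SH 0 (u - 1) (v - 1)
    rw [zero_add, sub_add_cancel, sub_add_cancel] at this
    exact this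
  -- Row rule: flips propagate along the second coordinate.
  have rowRule : ∀ u v : ZMod (2 * k),
      ¬(f 0 u v = f 0 (u + 1) v ∧ f 0 (u + 1) v = f 0 (u - 1) v + 1) := by
    intro u v hc
    have h := hpoly 0 u v 0 (u + 1) v 1 u (v + 1)
      (Or.inl ⟨rfl, (zero_add 1).symm⟩)
      (Or.inr (Or.inl ⟨rfl, rfl⟩))
      (Or.inl ⟨rfl, rfl⟩)
    apply h
    refine ⟨hc.1, ?_⟩
    rw [hf1 u (v + 1), add_sub_cancel_right]
    exact hc.2
  -- Column rule: flips propagate along the third coordinate.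
  have colRule : ∀ u v : ZMod (2 * k),
      ¬(f 0 u v = f 0 u (v + 1) ∧ f 0 u (v + 1) = f 0 u (v - 1) + 1) := by
    intro u v hc
    have h := hpoly 0 u v 0 u (v + 1) 1 (u + 1) v
      (Or.inl ⟨rfl, (zero_add 1).symm⟩)
      (Or.inl ⟨rfl, rfl⟩)
      (Or.inr (Or.inl ⟨rfl, rfl⟩))
    apply h
    refine ⟨hc.1, ?_⟩
    rw [hf1 (u + 1) v, add_sub_cancel_right]
    exact hc.2
  -- Star rule.
  have starRule : ∀ u v : ZMod (2 * k),
      f 0 (u + 1) v = f 0 u (v + 1) → f 0 (u + 1) v = f 0 (u - 1) (v - 1) := by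
    intro u v he
    by_contra hne
    have h := hpoly 1 u v 0 (u + 1) v 0 u (v + 1)
      (Or.inr (Or.inr ⟨rfl, (zero_add 1).symm⟩))
      (Or.inr (Or.inl ⟨rfl, rfl⟩))
      (Or.inl ⟨rfl, rfl⟩)
    apply h
    refine ⟨?_, he⟩
    rw [hf1 u v]
    exact (zmod2_ne' hne).symm
  -- Each row is constant or alternating.
  have rowDich : ∀ v : ZMod (2 * k),
      (∀ u, f 0 (u + 1) v = f 0 u v) ∨ (∀ u, f 0 (u + 1) v = f 0 u v + 1) := by
    intro v
    have H : ∀ d : ZMod (2 * k), f 0 d v ≠ f 0 (d + 1) v → f 0 (d + 1) v ≠ f 0 (d + 2) v := by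
      intro d hne heq
      have e1 : d + 1 + 1 = d + 2 := by ring
      have e2 : d + 1 - 1 = d := by ring
      apply rowRule (d + 1) v
      rw [e1, e2]
      exact ⟨heq, by rw [← heq]; exact zmod2_ne hne⟩
    exact aux_cyc (fun u => f 0 u v) H
  have colDich : ∀ u : ZMod (2 * k),
      (∀ v, f 0 u (v + 1) = f 0 u v) ∨ (∀ v, f 0 u (v + 1) = f 0 u v + 1) := by
    intro u
    have H : ∀ d : ZMod (2 * k), f 0 u d ≠ f 0 u (d + 1) → f 0 u (d + 1) ≠ f 0 u (d + 2) := by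
      intro d hne heq
      have e1 : d + 1 + 1 = d + 2 := by ring
      have e2 : d + 1 - 1 = d := by ring
      apply colRule u (d + 1)
      rw [e1, e2]
      exact ⟨heq, by rw [← heq]; exact zmod2_ne hne⟩
    exact aux_cyc (fun v => f 0 u v) H
  have rowPer : ∀ u v : ZMod (2 * k), f 0 (u + 2) v = f 0 u v := by
    intro u v
    have e : u + 2 = u + 1 + 1 := by ring
    rcases rowDich v with h | h
    · rw [e, h (u + 1), h u]
    · rw [e, h (u + 1), h u, zmod2_aa]
  have colPer : ∀ u v : ZMod (2 * k), f 0 u (v + 2) = f 0 u v := by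
    intro u v
    have e : v + 2 = v + 1 + 1 := by ring
    rcases colDich u with h | h
    · rw [e, h (v + 1), h v]
    · rw [e, h (v + 1), h v, zmod2_aa]
  -- Diagonal normal form.
  have step : ∀ (m : ℕ) (a b c : ZMod (2 * k)),
      f (a + m) (b + m) (c + m) = f a b c + ((m : ℕ) : ZMod 2) := by
    intro m
    induction m with
    | zero => intro a b c; norm_num
    | succ m ih =>
      intro a b c
      have e : ∀ x : ZMod (2 * k), x + ((m + 1 : ℕ) : ZMod (2 * k)) = (x + m) + 1 := by
        intro x; push_cast; ring
      rw [e, e, e, SH, ih]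
      push_cast
      ring
  have DIAG : ∀ x y z : ZMod (2 * k),
      f x y z = f 0 (y - x) (z - x) + ((x.val : ℕ) : ZMod 2) := by
    intro x y z
    have hx : ((x.val : ℕ) : ZMod (2 * k)) = x := ZMod.natCast_rightInverse x
    have h := step x.val 0 (y - x) (z - x)
    rw [hx, zero_add, sub_add_cancel, sub_add_cancel] at h
    exact h
  have hcast : ∀ d e : ZMod (2 * k),
      (((d - e).val : ℕ) : ZMod 2) + ((e.val : ℕ) : ZMod 2) = ((d.val : ℕ) : ZMod 2) := by
    intro d e
    have h2 : (2 : ℕ) ∣ 2 * k := ⟨k, rfl⟩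
    have hh : ∀ a : ZMod (2 * k), ((a.val : ℕ) : ZMod 2) = ZMod.castHom h2 (ZMod 2) a := by
      intro a; rw [ZMod.castHom_apply, ZMod.natCast_val]
    rw [hh, hh, hh, map_sub, sub_add_cancel]
  by_cases hrows : ∀ v u : ZMod (2 * k), f 0 (u + 1) v = f 0 u v
  · -- all rows constant
    have hGv : ∀ u v : ZMod (2 * k), f 0 u v = f 0 0 v := by
      intro u v
      exact aux_const (fun u => f 0 u v) (hrows v) u
    rcases colDich 0 with hc | hc
    · -- f is constant on the reduced grid: first-coordinate dictator
      have hG : ∀ u v : ZMod (2 * k), f 0 u v = f 0 0 0 := by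
        intro u v
        rw [hGv u v]
        exact aux_const (fun v => f 0 0 v) hc v
      refine ⟨0, f 0 0 0, ?_⟩
      intro x y z
      simp only [Matrix.cons_val_zero]
      rw [DIAG x y z, hG]
      ring
    · -- third-coordinate dictator
      have hG : ∀ u v : ZMod (2 * k), f 0 u v = f 0 0 0 + ((v.val : ℕ) : ZMod 2) := by
        intro u v
        rw [hGv u v]
        exact aux_affine (fun v => f 0 0 v) hc v
      refine ⟨2, f 0 0 0, ?_⟩
      intro x y z
      simp only [Matrix.cons_val_two, Matrix.tail_cons, Matrix.head_cons]
      rw [DIAG x y z, hG, add_assoc, hcast z x]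
      exact add_comm _ _
  · push_neg at hrows
    obtain ⟨v₀, u', hu'⟩ := hrows
    have hR : ∀ u, f 0 (u + 1) v₀ = f 0 u v₀ + 1 := by
      rcases rowDich v₀ with h | h
      · exact absurd (h u') hu'
      · exact h
    by_cases hcols : ∀ u v : ZMod (2 * k), f 0 u (v + 1) = f 0 u v
    · -- all columns constant: second-coordinate dictator
      have hGv : ∀ u v : ZMod (2 * k), f 0 u v = f 0 u 0 := by
        intro u v
        exact aux_const (fun v => f 0 u v) (hcols u) v
      have hR0 : ∀ u, f 0 (u + 1) 0 = f 0 u 0 + 1 := by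
        intro u
        calc f 0 (u + 1) 0 = f 0 (u + 1) v₀ := (hGv (u + 1) v₀).symm
          _ = f 0 u v₀ + 1 := hR u
          _ = f 0 u 0 + 1 := by rw [hGv u v₀]
      have hG : ∀ u v : ZMod (2 * k), f 0 u v = f 0 0 0 + ((u.val : ℕ) : ZMod 2) := by
        intro u v
        rw [hGv u v]
        exact aux_affine (fun u => f 0 u 0) hR0 u
      refine ⟨1, f 0 0 0, ?_⟩
      intro x y z
      simp only [Matrix.cons_val_one, Matrix.head_cons]
      rw [DIAG x y z, hG, add_assoc, hcast y x]
      exact add_comm _ _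
    · -- some row and some column alternate: contradiction
      push_neg at hcols
      obtain ⟨u₀, v', hv'⟩ := hcols
      have hC : ∀ v, f 0 u₀ (v + 1) = f 0 u₀ v + 1 := by
        rcases colDich u₀ with h | h
        · exact absurd (h v') hv'
        · exact h
      exfalso
      have h1 : f 0 (u₀ + 1) v₀ = f 0 u₀ v₀ + 1 := hR u₀
      have h2 : f 0 u₀ (v₀ + 1) = f 0 u₀ v₀ + 1 := hC v₀
      have star1 := starRule u₀ v₀ (h1.trans h2.symm)
      have p1 : f 0 (u₀ - 1) (v₀ - 1) = f 0 (u₀ + 1) (v₀ + 1) := by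
        have e1 : u₀ + 1 = (u₀ - 1) + 2 := by ring
        have e2 : v₀ + 1 = (v₀ - 1) + 2 := by ring
        rw [e1, e2, rowPer, colPer]
      have hA : f 0 (u₀ + 1 + 1) (v₀ + 1) = f 0 u₀ v₀ + 1 := by
        have e : u₀ + 1 + 1 = u₀ + 2 := by ring
        rw [e, rowPer]
        exact h2
      have hB : f 0 (u₀ + 1) (v₀ + 1 + 1) = f 0 u₀ v₀ + 1 := by
        have e : v₀ + 1 + 1 = v₀ + 2 := by ring
        rw [e, colPer]
        exact h1
      have star2 := starRule (u₀ + 1) (v₀ + 1) (hA.trans hB.symm)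
      rw [hA, add_sub_cancel_right, add_sub_cancel_right] at star2
      exact zmod2_self_ne (f 0 u₀ v₀) star2.symm
end

section
/- Let f : (ℤ/2k)³ → {0,1} be a polymorphism of (D̂_{2k}, NAE). Then for all x, y, z ∈ ℤ/2k, f(x+1, y+1, z+1) ≠ f(x, y, z), and consequently f(x, y, z) = f(x−z, y−z, 0) + z (mod 2). -/
/-- For a polymorphism f of (D̂_{2k}, NAE): f(x+1,y+1,z+1) ≠ f(x,y,z), and
f(x,y,z) = f(x-z, y-z, 0) + z (mod 2). -/
theorem stmt_15 (k : ℕ) (hk : 0 < k)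
    (f : ZMod (2 * k) → ZMod (2 * k) → ZMod (2 * k) → ZMod 2)
    (hpoly : ∀ x₁ x₂ x₃ y₁ y₂ y₃ z₁ z₂ z₃ : ZMod (2 * k),
      ((x₁ = y₁ ∧ z₁ = x₁ + 1) ∨ (x₁ = z₁ ∧ y₁ = x₁ + 1) ∨ (y₁ = z₁ ∧ x₁ = y₁ + 1)) →
      ((x₂ = y₂ ∧ z₂ = x₂ + 1) ∨ (x₂ = z₂ ∧ y₂ = x₂ + 1) ∨ (y₂ = z₂ ∧ x₂ = y₂ + 1)) →
      ((x₃ = y₃ ∧ z₃ = x₃ + 1) ∨ (x₃ = z₃ ∧ y₃ = x₃ + 1) ∨ (y₃ = z₃ ∧ x₃ = y₃ + 1)) →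
      ¬ (f x₁ x₂ x₃ = f y₁ y₂ y₃ ∧ f y₁ y₂ y₃ = f z₁ z₂ z₃)) :
    ∀ x y z : ZMod (2 * k),
      f (x + 1) (y + 1) (z + 1) ≠ f x y z ∧
      f x y z = f (x - z) (y - z) 0 + (z.val : ZMod 2) := by
  have step : ∀ x y z : ZMod (2 * k), f (x + 1) (y + 1) (z + 1) ≠ f x y z := by
    intro x y z h
    exact hpoly x y z x y z (x+1) (y+1) (z+1)
      (Or.inl ⟨rfl, rfl⟩) (Or.inl ⟨rfl, rfl⟩) (Or.inl ⟨rfl, rfl⟩) ⟨rfl, h.symm⟩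
  have step' : ∀ x y z : ZMod (2 * k), f (x + 1) (y + 1) (z + 1) = f x y z + 1 := by
    intro x y z
    have h := step x y z
    revert h
    generalize f (x+1) (y+1) (z+1) = a
    generalize f x y z = b
    revert a b
    decide
  have key : ∀ (n : ℕ) (a b : ZMod (2 * k)),
      f (a + (n : ZMod (2 * k))) (b + (n : ZMod (2 * k))) (n : ZMod (2 * k))
        = f a b 0 + (n : ZMod 2) := by
    intro n
    induction n with
    | zero => intro a b; simp
    | succ n ih =>
      intro a b
      have : ((n + 1 : ℕ) : ZMod (2 * k)) = (n : ZMod (2 * k)) + 1 := by push_cast; ring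
      rw [this, ← add_assoc, ← add_assoc, step', ih]
      push_cast
      ring
  intro x y z
  refine ⟨step x y z, ?_⟩
  haveI : NeZero (2 * k) := ⟨by omega⟩
  have hz : ((z.val : ℕ) : ZMod (2 * k)) = z := by simp [ZMod.natCast_val, ZMod.cast_id]
  have := key z.val (x - z) (y - z)
  rw [hz] at this
  simpa using this
end

section
/- Let f : (ℤ/2k)³ → {0,1} be a polymorphism of (D̂_{2k}, NAE) and define M(x,y) = f(x,y,0). If M(x,y) = M(x,y+1) for some x,y, then M(x, ·) is constant, i.e., M(x, y') = M(x, y) for all y' ∈ ℤ/2k. -/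
/-- For M(x,y) = f(x,y,0) with f a polymorphism of (D̂_{2k}, NAE): if two
horizontally adjacent entries of M are equal, the whole row is constant. -/
theorem stmt_16 (k : ℕ) (hk : 0 < k)
    (f : ZMod (2 * k) → ZMod (2 * k) → ZMod (2 * k) → ZMod 2)
    (hpoly : ∀ x₁ x₂ x₃ y₁ y₂ y₃ z₁ z₂ z₃ : ZMod (2 * k),
      ((x₁ = y₁ ∧ z₁ = x₁ + 1) ∨ (x₁ = z₁ ∧ y₁ = x₁ + 1) ∨ (y₁ = z₁ ∧ x₁ = y₁ + 1)) →
      ((x₂ = y₂ ∧ z₂ = x₂ + 1) ∨ (x₂ = z₂ ∧ y₂ = x₂ + 1) ∨ (y₂ = z₂ ∧ x₂ = y₂ + 1)) →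
      ((x₃ = y₃ ∧ z₃ = x₃ + 1) ∨ (x₃ = z₃ ∧ y₃ = x₃ + 1) ∨ (y₃ = z₃ ∧ x₃ = y₃ + 1)) →
      ¬ (f x₁ x₂ x₃ = f y₁ y₂ y₃ ∧ f y₁ y₂ y₃ = f z₁ z₂ z₃))
    (x y : ZMod (2 * k)) (h : f x y 0 = f x (y + 1) 0) :
    ∀ y' : ZMod (2 * k), f x y' 0 = f x y 0 := by
  haveI : NeZero (2 * k) := ⟨by omega⟩
  have two2 : ∀ a b c : ZMod 2, a ≠ c → b ≠ c → a = b := by decide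
  -- fact 1 : f x c 0 ≠ f (x+1) (c+1) 1
  have hE : ∀ c : ZMod (2 * k), f x c 0 ≠ f (x + 1) (c + 1) 1 := by
    intro c hc
    exact hpoly x c 0 (x + 1) (c + 1) 1 x c 0
      (Or.inr (Or.inl ⟨rfl, rfl⟩)) (Or.inr (Or.inl ⟨rfl, rfl⟩))
      (Or.inr (Or.inl ⟨rfl, (zero_add 1).symm⟩)) ⟨hc, hc.symm⟩
  -- fact 2 : equality propagates backwards
  have hN : ∀ c : ZMod (2 * k), f x c 0 = f x (c + 1) 0 → f x (c - 1) 0 = f x c 0 := by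
    intro c hc
    have h1 : f (x + 1) c 1 ≠ f x c 0 := by
      intro hq
      exact hpoly (x + 1) c 1 x c 0 x (c + 1) 0
        (Or.inr (Or.inr ⟨rfl, rfl⟩)) (Or.inl ⟨rfl, rfl⟩)
        (Or.inr (Or.inr ⟨rfl, (zero_add 1).symm⟩)) ⟨hq, hc⟩
    have h2 : f x (c - 1) 0 ≠ f (x + 1) c 1 := by
      have := hE (c - 1)
      rwa [sub_add_cancel] at this
    exact two2 _ _ _ h2 (Ne.symm h1)
  have key : ∀ n : ℕ, f x (y - n) 0 = f x y 0 ∧ f x (y - n) 0 = f x (y - n + 1) 0 := by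
    intro n
    induction n with
    | zero => simp only [Nat.cast_zero, sub_zero]; exact ⟨trivial, h⟩
    | succ n ih =>
      obtain ⟨ih1, ih2⟩ := ih
      have hstep := hN (y - n) ih2
      have hc : (y : ZMod (2 * k)) - ((n + 1 : ℕ) : ZMod (2 * k)) = y - n - 1 := by
        push_cast; ring
      refine ⟨?_, ?_⟩
      · rw [hc]; exact hstep.trans ih1
      · rw [hc, sub_add_cancel]; exact hstep
  intro y'
  have hy : y - (((y - y').val : ℕ) : ZMod (2 * k)) = y' := by
    rw [ZMod.natCast_val, ZMod.cast_id]
    ring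
  have := (key (y - y').val).1
  rwa [hy] at this
end

section
/- Let f : (ℤ/2k)³ → {0,1} be a polymorphism of (D̂_{2k}, NAE) and define M(x,y) = f(x,y,0). Then for all x, y ∈ ℤ/2k: if M(x, y+1) = M(x+1, y) then M(x−1, y−1) = M(x, y+1). -/
/-- For M(x,y) = f(x,y,0) with f a polymorphism of (D̂_{2k}, NAE):
if M(x,y+1) = M(x+1,y) then M(x-1,y-1) = M(x,y+1). -/
theorem stmt_17 (k : ℕ) (hk : 0 < k)
    (f : ZMod (2 * k) → ZMod (2 * k) → ZMod (2 * k) → ZMod 2)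
    (hpoly : ∀ x₁ x₂ x₃ y₁ y₂ y₃ z₁ z₂ z₃ : ZMod (2 * k),
      ((x₁ = y₁ ∧ z₁ = x₁ + 1) ∨ (x₁ = z₁ ∧ y₁ = x₁ + 1) ∨ (y₁ = z₁ ∧ x₁ = y₁ + 1)) →
      ((x₂ = y₂ ∧ z₂ = x₂ + 1) ∨ (x₂ = z₂ ∧ y₂ = x₂ + 1) ∨ (y₂ = z₂ ∧ x₂ = y₂ + 1)) →
      ((x₃ = y₃ ∧ z₃ = x₃ + 1) ∨ (x₃ = z₃ ∧ y₃ = x₃ + 1) ∨ (y₃ = z₃ ∧ x₃ = y₃ + 1)) →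
      ¬ (f x₁ x₂ x₃ = f y₁ y₂ y₃ ∧ f y₁ y₂ y₃ = f z₁ z₂ z₃)) :
    ∀ x y : ZMod (2 * k),
      f x (y + 1) 0 = f (x + 1) y 0 → f (x - 1) (y - 1) 0 = f x (y + 1) 0 := by
  intro x y h
  have h1 := hpoly x (y+1) 0 (x+1) y 0 x y 1
    (Or.inr (Or.inl ⟨rfl, rfl⟩))
    (Or.inr (Or.inr ⟨rfl, rfl⟩))
    (Or.inl ⟨rfl, (zero_add 1).symm⟩)
  have h2 := hpoly (x-1) (y-1) 0 x y 1 (x-1) (y-1) 0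
    (Or.inr (Or.inl ⟨rfl, by ring⟩))
    (Or.inr (Or.inl ⟨rfl, by ring⟩))
    (Or.inr (Or.inl ⟨rfl, (zero_add 1).symm⟩))
  have hne1 : f (x+1) y 0 ≠ f x y 1 := fun he => h1 ⟨h, he⟩
  have hne2 : f (x-1) (y-1) 0 ≠ f x y 1 := fun he => h2 ⟨he, he.symm⟩
  rw [h]
  revert hne1 hne2
  generalize f (x+1) y 0 = a
  generalize f x y 1 = b
  generalize f (x-1) (y-1) 0 = c
  revert a b c; decide
end

section
/- Let G be a finite digraph such that there is a surjective homomorphism from Z = (ℤ; {(x,y,z) : x+y+z=1}) to Ĝ, where Ĝ is the structure on V(G) with relation {(x,x,y),(x,y,x),(y,x,x) : (x,y) ∈ E(G)}. If G has no loop and no 2-cycle, then G is a tournament: for all distinct vertices u, v of G, either (u,v) ∈ E(G) or (v,u) ∈ E(G). -/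
/-- If there is a surjective homomorphism from Z = (ℤ; x+y+z=1) to Ĝ and G
has no loops and no 2-cycles, then G is a tournament. -/
theorem stmt_19 {V : Type} [Fintype V] (E : V → V → Prop)
    (hloop : ∀ v, ¬ E v v)
    (hno2 : ∀ u v, u ≠ v → E u v → ¬ E v u)
    (h : ℤ → V) (hsurj : Function.Surjective h)
    (hhom : ∀ x y z : ℤ, x + y + z = 1 →
      (h x = h y ∧ E (h x) (h z)) ∨ (h x = h z ∧ E (h x) (h y)) ∨
      (h y = h z ∧ E (h y) (h x))) :
    ∀ u v : V, u ≠ v → E u v ∨ E v u := by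
  intro u v huv
  obtain ⟨x, rfl⟩ := hsurj u
  obtain ⟨y, rfl⟩ := hsurj v
  rcases hhom x y (1 - x - y) (by ring) with ⟨he, _⟩ | ⟨_, hE⟩ | ⟨_, hE⟩
  · exact absurd he huv
  · exact Or.inl hE
  · exact Or.inr hE
end
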